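/- arXiv:2112.15287 — 3 statements merged into one kernel-verified Lean document; each statement's English description precedes it below -/
import Mathlib

section
/- (Lemma 5) If α_t ≤ 1/(2L), then for all epochs t ≥ 0 and all ℓ = 0,…,m−1: E[‖x̄_t^{ℓ+1} − x̄_*^{ℓ+1}‖²] ≤ (1 − α_t μ/2) E[‖x̄_t^{ℓ} − x̄_*^{ℓ}‖²] + 2α_t σ_shuffle² + (2α_t L²/n)(1/μ + α_t) E[‖𝐱_t^{ℓ} − 𝟏(x̄_t^{ℓ})^⊺‖²]. -/
/-!
Because `W` is doubly stochastic, averaging the D-RR update shows that `x̄_t^ℓ` takes an inexact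
gradient step on the permuted average `f_ℓ := (1/n) ∑_i f_{i,π_ℓ^i}`, with squared gradient error
at most `L²/n` times the consensus error, while `x̄_*^ℓ` takes the step with the gradient frozen at
`x*`. In the expansion of the squared distance between the two, the three-point identity for the
Bregman divergence `D` of `f_ℓ`, strong convexity and the cocoercivity of `∇f_ℓ` bound the cross
term `-2⟪∇f_ℓ(x̄) - ∇f_ℓ(x*), x̄ - x̄_*⟫` by `-μ‖x̄ - x̄_*‖² - ‖∇f_ℓ(x̄) - ∇f_ℓ(x*)‖²/L
+ 2 D(x̄_*, x*)`; Young's inequality and `α ≤ 1/(2L)` absorb the rest. In expectation only the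
current epoch's permutations matter, and the mean of `D(x̄_*^ℓ, x*)` is one of the terms whose
maximum is `σ_shuffle²`.
-/

open Finset
open scoped RealInnerProductSpace

noncomputable section

namespace DRR

/-- Vectors in ℝ^p. -/
abbrev Vec (p : ℕ) := EuclideanSpace ℝ (Fin p)

/-- Sample space: one permutation of `[m]` per agent and per epoch. -/
abbrev Omega (n m : ℕ) := ℕ → Fin n → Equiv.Perm (Fin m)

/-- Expectation of a quantity that depends only on the permutations of the first `T`
epochs: the finite uniform average over those coordinates (unused later coordinates
are frozen to the identity permutation). -/
noncomputable def expE {n m : ℕ} (T : ℕ) (g : Omega n m → ℝ) : ℝ :=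
  (∑ σ : Fin T → Fin n → Equiv.Perm (Fin m),
      g fun k i => if h : k < T then σ ⟨k, h⟩ i else 1) /
    Fintype.card (Fin T → Fin n → Equiv.Perm (Fin m))

/-- Expectation over a single epoch's permutations. -/
noncomputable def expPerm {n m : ℕ} (g : (Fin n → Equiv.Perm (Fin m)) → ℝ) : ℝ :=
  (∑ π : Fin n → Equiv.Perm (Fin m), g π) / Fintype.card (Fin n → Equiv.Perm (Fin m))

/-- Spectral norm (ℓ₂ operator norm) of W − (1/n)𝟏𝟏ᵀ. -/
noncomputable def rhoW {n : ℕ} (W : Matrix (Fin n) (Fin n) ℝ) : ℝ :=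
  ‖LinearMap.toContinuousLinearMap
      (Matrix.toEuclideanLin (W - (n : ℝ)⁻¹ • Matrix.of fun _ _ => (1 : ℝ)))‖

/-- Average x̄ of the agents' vectors. -/
noncomputable def avg {n p : ℕ} (x : Fin n → Vec p) : Vec p := (n : ℝ)⁻¹ • ∑ i, x i

/-- Squared Frobenius consensus error ‖𝐱 − 𝟏x̄ᵀ‖². -/
noncomputable def consSq {n p : ℕ} (x : Fin n → Vec p) : ℝ := ∑ i, ‖x i - avg x‖ ^ 2

/-- The "real limit points" x̄_*^ℓ = x* − α ∑_{k<ℓ} (1/n) ∑_i ∇f_{i,π_k^i}(x*). -/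
noncomputable def xbarStar {n m p : ℕ} (f : Fin n → Fin m → Vec p → ℝ) (xstar : Vec p)
    (α : ℝ) (π : Fin n → Equiv.Perm (Fin m)) (ℓ : ℕ) : Vec p :=
  xstar - α • ∑ k ∈ univ.filter fun k : Fin m => (k : ℕ) < ℓ,
    (n : ℝ)⁻¹ • ∑ i, gradient (f i (π i k)) xstar

/-- σ_*² := (1/(mn)) ∑_i ∑_ℓ ‖∇f_{i,ℓ}(x*)‖². -/
noncomputable def sigStarSq {n m p : ℕ} (f : Fin n → Fin m → Vec p → ℝ) (xstar : Vec p) : ℝ :=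
  ((m : ℝ) * n)⁻¹ * ∑ i, ∑ ℓ, ‖gradient (f i ℓ) xstar‖ ^ 2

/-- The shuffling variance σ_shuffle² for stepsize α. -/
noncomputable def sigShuffleSq {n m p : ℕ} (f : Fin n → Fin m → Vec p → ℝ) (xstar : Vec p)
    (α : ℝ) : ℝ :=
  ⨆ ℓ : Fin m, expPerm fun π =>
    ((n : ℝ)⁻¹ * ∑ i, f i (π i ℓ) (xbarStar f xstar α π ℓ))
      - ((n : ℝ)⁻¹ * ∑ i, f i (π i ℓ) xstar)
      - (inner ℝ ((n : ℝ)⁻¹ • ∑ i, gradient (f i (π i ℓ)) xstar)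
          (xbarStar f xstar α π ℓ - xstar) : ℝ)

/-- Condition (A) on the stepsize. -/
def condA (ρ μ L α : ℝ) : Prop :=
  α ≤ min (Real.sqrt ((2 - ρ ^ 2) / (24 * ρ ^ 2 * (5 - ρ ^ 2))) * (1 - ρ ^ 2) / L)
      (min ((1 - ρ ^ 2) / (2 * μ)) ((1 - ρ ^ 2) * μ / (8 * Real.sqrt 30 * L ^ 2)))

/-- The Lyapunov function H_t^ℓ. -/
noncomputable def Hfun {n m p : ℕ} (W : Matrix (Fin n) (Fin n) ℝ)
    (f : Fin n → Fin m → Vec p → ℝ) (xstar : Vec p) (μ L : ℝ) (α : ℕ → ℝ)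
    (x : Omega n m → ℕ → ℕ → Fin n → Vec p) (t ℓ : ℕ) : ℝ :=
  expE (t + 1) (fun ω => ‖avg (x ω t ℓ) - xbarStar f xstar (α t) (ω t) ℓ‖ ^ 2)
    + (16 * α t * L ^ 2 / (n * μ * (1 - rhoW W ^ 2)))
        * expE (t + 1) (fun ω => consSq (x ω t ℓ))

end DRR

theorem half_mul_le_sub_of_hasDerivAt {φ φ' : ℝ → ℝ} (hφ : ∀ s, HasDerivAt φ (φ' s) s) {a : ℝ}
    (ha : ∀ s ∈ Set.Ioo (0 : ℝ) 1, a * s ≤ φ' s) : a / 2 ≤ φ 1 - φ 0 := by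
  have hψ : ∀ s, HasDerivAt (fun s => φ s - a / 2 * s ^ 2) (φ' s - a * s) s := fun s =>
    ((hφ s).fun_sub ((hasDerivAt_pow 2 s).const_mul (a / 2))).congr_deriv (by push_cast; ring)
  have hmono : MonotoneOn (fun s => φ s - a / 2 * s ^ 2) (Set.Icc 0 1) := by
    refine monotoneOn_of_hasDerivWithinAt_nonneg (convex_Icc 0 1)
      (HasDerivAt.continuousOn fun s _ => hψ s) (fun s _ => (hψ s).hasDerivWithinAt) ?_
    rw [interior_Icc]
    exact fun s hs => sub_nonneg.mpr (ha s hs)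
  have := hmono (by norm_num) (by norm_num) zero_le_one
  simp only at this
  linarith

theorem two_mul_le_mul_sq_add_sq_div {c : ℝ} (hc : 0 < c) (a b : ℝ) :
    2 * a * b ≤ c * a ^ 2 + b ^ 2 / c := by
  have h : c * a ^ 2 + b ^ 2 / c - 2 * a * b = (c * a - b) ^ 2 / c := by field_simp; ring
  have : 0 ≤ (c * a - b) ^ 2 / c := by positivity
  linarith

theorem pos_of_le_one_div_two_mul {α L : ℝ} (hα : 0 < α) (hαL : α ≤ 1 / (2 * L)) : 0 < L := by
  have := hα.trans_le hαL
  rw [one_div, inv_pos] at this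
  linarith

theorem norm_sub_smul_sub_smul_sq_le {E : Type*} [NormedAddCommGroup E] [InnerProductSpace ℝ E]
    {d Δ e : E} {μ L α B : ℝ} (hμ : 0 < μ) (hα : 0 < α)
    (hαL : α ≤ 1 / (2 * L)) (h : μ / 2 * ‖d‖ ^ 2 + ‖Δ‖ ^ 2 / (2 * L) - B ≤ ⟪Δ, d⟫) :
    ‖d - α • Δ - α • e‖ ^ 2
      ≤ (1 - α * μ / 2) * ‖d‖ ^ 2 + 2 * α * B + (2 * α / μ + 2 * α ^ 2) * ‖e‖ ^ 2 := by
  have hL : 0 < 2 * L := by linarith [pos_of_le_one_div_two_mul hα hαL]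
  have h2αL : α * (2 * L) ≤ 1 := (le_div_iff₀ hL).mp hαL
  rw [one_div] at hαL
  set a := ‖d‖
  set b := ‖e‖
  set c := ‖Δ‖
  have hexp : ‖d - α • Δ - α • e‖ ^ 2
      = a ^ 2 - 2 * α * ⟪Δ, d⟫ + α ^ 2 * c ^ 2 - 2 * α * ⟪d, e⟫ + 2 * α ^ 2 * ⟪Δ, e⟫
        + α ^ 2 * b ^ 2 := by
    rw [@norm_sub_sq_real, @norm_sub_sq_real]
    simp only [inner_sub_left, real_inner_smul_left, real_inner_smul_right, norm_smul,
      Real.norm_eq_abs, mul_pow, sq_abs, real_inner_comm d Δ]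
    ring
  have hde : -⟪d, e⟫ ≤ a * b := neg_le.mp (abs_le.mp (abs_real_inner_le_norm d e)).1
  have hΔe : ⟪Δ, e⟫ ≤ c * b := real_inner_le_norm Δ e
  -- Young's inequality on the two cross terms with `e` (weights `μ / 2` and `2L`);
  -- `α ≤ 1/(2L)` absorbs `α²‖Δ‖²`.
  have hab := two_mul_le_mul_sq_add_sq_div (half_pos hμ) a b
  have hcb := two_mul_le_mul_sq_add_sq_div hL (α * b) c
  have hαc := mul_le_mul_of_nonneg_left hαL (by positivity : 0 ≤ α * c ^ 2)
  have hαb := mul_le_mul_of_nonneg_right h2αL (by positivity : 0 ≤ α ^ 2 * b ^ 2)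
  linear_combination hexp + mul_le_mul_of_nonneg_left h (by positivity : (0 : ℝ) ≤ 2 * α)
    + mul_le_mul_of_nonneg_left hde (by positivity : (0 : ℝ) ≤ 2 * α)
    + mul_le_mul_of_nonneg_left hΔe (by positivity : (0 : ℝ) ≤ 2 * α ^ 2)
    + mul_le_mul_of_nonneg_left hab hα.le + mul_le_mul_of_nonneg_left hcb hα.le + hαc + hαb

section Bregman

variable {E : Type*} [NormedAddCommGroup E] [InnerProductSpace ℝ E]

def bregman (F : E → ℝ) (G : E → E) (u v : E) : ℝ := F u - F v - ⟪G v, u - v⟫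

theorem bregman_three_point (F : E → ℝ) (G : E → E) (w u v : E) :
    bregman F G w u + bregman F G u v - bregman F G w v = ⟪G u - G v, u - w⟫ := by
  simp only [bregman, inner_sub_left, inner_sub_right]
  ring

theorem bregman_eq_segment_sub (F : E → ℝ) (G : E → E) (u v : E) :
    bregman F G u v = (F (v + (1 : ℝ) • (u - v)) - 1 * ⟪G v, u - v⟫)
      - (F (v + (0 : ℝ) • (u - v)) - 0 * ⟪G v, u - v⟫) := by
  simp only [bregman, one_smul, add_sub_cancel, zero_smul, add_zero]
  ring

variable [CompleteSpace E] {F : E → ℝ} {G : E → E}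

theorem hasDerivAt_bregman_segment (hF : ∀ x, HasGradientAt F (G x) x) (u v : E) (s : ℝ) :
    HasDerivAt (fun s : ℝ => F (v + s • (u - v)) - s * ⟪G v, u - v⟫)
      ⟪G (v + s • (u - v)) - G v, u - v⟫ s := by
  have hpath : HasDerivAt (fun s : ℝ => v + s • (u - v)) (u - v) s := by
    simpa using ((hasDerivAt_id s).smul_const (u - v)).const_add v
  have hcomp : HasDerivAt (fun s : ℝ => F (v + s • (u - v))) ⟪G (v + s • (u - v)), u - v⟫ s := by
    simpa [InnerProductSpace.toDual_apply_apply, Function.comp_def] using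
      (hF (v + s • (u - v))).hasFDerivAt.comp_hasDerivAt s hpath
  rw [inner_sub_left]
  simpa using hcomp.fun_sub ((hasDerivAt_id s).mul_const ⟪G v, u - v⟫)

theorem half_mul_norm_sq_le_bregman {μ : ℝ} (hF : ∀ x, HasGradientAt F (G x) x)
    (hG : ∀ x y, μ * ‖x - y‖ ^ 2 ≤ ⟪G x - G y, x - y⟫) (u v : E) :
    μ / 2 * ‖u - v‖ ^ 2 ≤ bregman F G u v := by
  rw [bregman_eq_segment_sub, div_mul_eq_mul_div]
  refine half_mul_le_sub_of_hasDerivAt (hasDerivAt_bregman_segment hF u v)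
    (a := μ * ‖u - v‖ ^ 2) fun s hs => ?_
  have h := hG (v + s • (u - v)) v
  rw [add_sub_cancel_left, real_inner_smul_right, norm_smul, Real.norm_eq_abs,
    abs_of_pos hs.1] at h
  nlinarith [hs.1]

theorem bregman_le_half_mul_norm_sq {L : ℝ} (hF : ∀ x, HasGradientAt F (G x) x)
    (hG : ∀ x y, ‖G x - G y‖ ≤ L * ‖x - y‖) (u v : E) :
    bregman F G u v ≤ L / 2 * ‖u - v‖ ^ 2 := by
  have h := half_mul_le_sub_of_hasDerivAt (fun s => (hasDerivAt_bregman_segment hF u v s).neg)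
    (a := -(L * ‖u - v‖ ^ 2)) fun s hs => by
      have hlip := hG (v + s • (u - v)) v
      rw [add_sub_cancel_left, norm_smul, Real.norm_eq_abs, abs_of_pos hs.1] at hlip
      have hcs := real_inner_le_norm (G (v + s • (u - v)) - G v) (u - v)
      nlinarith [norm_nonneg (u - v)]
  rw [bregman_eq_segment_sub]
  simp only [Pi.neg_apply] at h
  linarith

theorem norm_sq_div_le_bregman {L : ℝ} (hL : 0 < L) (hF : ∀ x, HasGradientAt F (G x) x)
    (hmono : ∀ x y, 0 ≤ ⟪G x - G y, x - y⟫) (hlip : ∀ x y, ‖G x - G y‖ ≤ L * ‖x - y‖)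
    (u v : E) : ‖G u - G v‖ ^ 2 / (2 * L) ≤ bregman F G u v := by
  set w := u - L⁻¹ • (G u - G v)
  have hwv : 0 ≤ bregman F G w v := by
    simpa using half_mul_norm_sq_le_bregman (μ := 0) hF (by simpa using hmono) w v
  have hwu : bregman F G w u ≤ ‖G u - G v‖ ^ 2 / (2 * L) := by
    refine (bregman_le_half_mul_norm_sq hF hlip w u).trans_eq ?_
    rw [show w - u = -(L⁻¹ • (G u - G v)) by simp [w], norm_neg, norm_smul, Real.norm_eq_abs,
      abs_of_pos (inv_pos.mpr hL)]
    field_simp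
  have h3 := bregman_three_point F G w u v
  rw [show u - w = L⁻¹ • (G u - G v) by simp [w], real_inner_smul_right,
    real_inner_self_eq_norm_sq] at h3
  have : L⁻¹ * ‖G u - G v‖ ^ 2 = 2 * (‖G u - G v‖ ^ 2 / (2 * L)) := by field_simp
  linarith

theorem half_mul_norm_sq_add_sq_div_sub_bregman_le_inner {μ L : ℝ} (hμ : 0 ≤ μ) (hL : 0 < L)
    (hF : ∀ x, HasGradientAt F (G x) x) (hmono : ∀ x y, μ * ‖x - y‖ ^ 2 ≤ ⟪G x - G y, x - y⟫)
    (hlip : ∀ x y, ‖G x - G y‖ ≤ L * ‖x - y‖) (u s v : E) :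
    μ / 2 * ‖u - s‖ ^ 2 + ‖G u - G v‖ ^ 2 / (2 * L) - bregman F G s v ≤ ⟪G u - G v, u - s⟫ := by
  have hsu := half_mul_norm_sq_le_bregman hF hmono s u
  have huv := norm_sq_div_le_bregman hL hF
    (fun x y => (mul_nonneg hμ (sq_nonneg _)).trans (hmono x y)) hlip u v
  rw [← bregman_three_point F G s u v, norm_sub_rev]
  linarith

end Bregman

namespace DRR

section Average

variable {n p : ℕ}

theorem avg_sub (y z : Fin n → Vec p) : avg (fun i => y i - z i) = avg y - avg z := by
  simp only [avg, sum_sub_distrib, smul_sub]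

theorem avg_smul (c : ℝ) (y : Fin n → Vec p) : avg (fun i => c • y i) = c • avg y := by
  simp only [avg, ← smul_sum, smul_comm c]

theorem avg_mix {W : Matrix (Fin n) (Fin n) ℝ} (hW : ∀ j, ∑ i, W i j = 1) (y : Fin n → Vec p) :
    avg (fun i => ∑ j, W i j • y j) = avg y := by
  simp only [avg, sum_comm (γ := Fin n), ← sum_smul, hW, one_smul]

theorem inner_avg_left (y : Fin n → Vec p) (w : Vec p) :
    ⟪avg y, w⟫ = (n : ℝ)⁻¹ * ∑ i, ⟪y i, w⟫ := by
  rw [avg, real_inner_smul_left, sum_inner]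

theorem norm_avg_le (y : Fin n → Vec p) : ‖avg y‖ ≤ (n : ℝ)⁻¹ * ∑ i, ‖y i‖ := by
  rw [avg, norm_smul, Real.norm_eq_abs, abs_of_nonneg (by positivity)]
  exact mul_le_mul_of_nonneg_left (norm_sum_le _ _) (by positivity)

theorem norm_avg_sq_le (y : Fin n → Vec p) : ‖avg y‖ ^ 2 ≤ (n : ℝ)⁻¹ * ∑ i, ‖y i‖ ^ 2 := by
  have hjensen := sum_div_card_sq_le_sum_sq_div_card (s := univ) (f := fun i => ‖y i‖)
  simp only [card_univ, Fintype.card_fin, ← inv_mul_eq_div] at hjensen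
  exact (pow_le_pow_left₀ (norm_nonneg _) (norm_avg_le y) 2).trans hjensen

theorem hasGradientAt_avg {g : Fin n → Vec p → ℝ} (hg : ∀ i, Differentiable ℝ (g i)) (y : Vec p) :
    HasGradientAt (fun z => (n : ℝ)⁻¹ * ∑ i, g i z) (avg fun i => gradient (g i) y) y := by
  rw [hasGradientAt_iff_hasFDerivAt]
  have hsum : HasFDerivAt (fun z => ∑ i, g i z)
      (∑ i, (InnerProductSpace.toDual ℝ (Vec p)) (gradient (g i) y)) y :=
    HasFDerivAt.fun_sum fun i _ => (hg i y).hasGradientAt.hasFDerivAt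
  simpa [avg, map_smul, map_sum] using hsum.const_mul (n : ℝ)⁻¹

variable {G : Fin n → Vec p → Vec p}

theorem avg_strongMono (hn : 0 < n) {μ : ℝ}
    (hG : ∀ i x y, μ * ‖x - y‖ ^ 2 ≤ ⟪G i x - G i y, x - y⟫) (x y : Vec p) :
    μ * ‖x - y‖ ^ 2 ≤ ⟪avg (G · x) - avg (G · y), x - y⟫ := by
  rw [← avg_sub, inner_avg_left]
  calc μ * ‖x - y‖ ^ 2 = (n : ℝ)⁻¹ * ∑ _i : Fin n, μ * ‖x - y‖ ^ 2 := by
        simp only [sum_const, card_univ, Fintype.card_fin, nsmul_eq_mul]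
        field_simp
    _ ≤ _ := mul_le_mul_of_nonneg_left (sum_le_sum fun i _ => hG i x y) (by positivity)

theorem avg_lipschitz (hn : 0 < n) {L : ℝ} (hG : ∀ i x y, ‖G i x - G i y‖ ≤ L * ‖x - y‖)
    (x y : Vec p) : ‖avg (G · x) - avg (G · y)‖ ≤ L * ‖x - y‖ := by
  rw [← avg_sub]
  calc _ ≤ (n : ℝ)⁻¹ * ∑ i, ‖G i x - G i y‖ := norm_avg_le _
    _ ≤ (n : ℝ)⁻¹ * ∑ _i : Fin n, L * ‖x - y‖ :=
        mul_le_mul_of_nonneg_left (sum_le_sum fun i _ => hG i x y) (by positivity)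
    _ = L * ‖x - y‖ := by
        simp only [sum_const, card_univ, Fintype.card_fin, nsmul_eq_mul]
        field_simp

theorem norm_avg_sub_avg_sq_le_consSq {L : ℝ} (hG : ∀ i x y, ‖G i x - G i y‖ ≤ L * ‖x - y‖)
    (x : Fin n → Vec p) :
    ‖avg (fun j => G j (x j)) - avg (fun j => G j (avg x))‖ ^ 2 ≤ L ^ 2 / n * consSq x := by
  rw [← avg_sub, consSq, div_eq_inv_mul, mul_assoc, mul_sum]
  refine (norm_avg_sq_le _).trans (mul_le_mul_of_nonneg_left (sum_le_sum fun j _ => ?_)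
    (by positivity))
  rw [← mul_pow]
  exact pow_le_pow_left₀ (norm_nonneg _) (hG j _ _) 2

end Average

theorem xbarStar_succ {n m p : ℕ} (f : Fin n → Fin m → Vec p → ℝ) (xstar : Vec p) (α : ℝ)
    (π : Fin n → Equiv.Perm (Fin m)) (ℓ : Fin m) :
    xbarStar f xstar α π ((ℓ : ℕ) + 1)
      = xbarStar f xstar α π ℓ - α • avg (fun i => gradient (f i (π i ℓ)) xstar) := by
  have hset : (univ.filter fun k : Fin m => (k : ℕ) < (ℓ : ℕ) + 1)
      = insert ℓ (univ.filter fun k : Fin m => (k : ℕ) < ℓ) := by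
    ext k
    simp only [mem_filter, mem_univ, true_and, mem_insert, Fin.ext_iff]
    omega
  rw [xbarStar, xbarStar, hset, sum_insert (by simp), smul_add, avg]
  abel

section Expectation

variable {n m T : ℕ}

theorem expE_mono {g h : Omega n m → ℝ} (hgh : ∀ ω, g ω ≤ h ω) : expE T g ≤ expE T h :=
  div_le_div_of_nonneg_right (sum_le_sum fun _ _ => hgh _) (Nat.cast_nonneg _)

theorem expE_add (g h : Omega n m → ℝ) :
    expE T (fun ω => g ω + h ω) = expE T g + expE T h := by
  simp only [expE, sum_add_distrib, add_div]

theorem expE_const_mul (a : ℝ) (g : Omega n m → ℝ) :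
    expE T (fun ω => a * g ω) = a * expE T g := by
  simp only [expE, ← mul_sum, mul_div_assoc]

theorem expE_comp_eval {t : ℕ} (ht : t < T) (h : (Fin n → Equiv.Perm (Fin m)) → ℝ) :
    expE T (fun ω => h (ω t)) = expPerm h := by
  have hsum := Fintype.sum_piFinset_apply h (univ : Finset (Fin n → Equiv.Perm (Fin m)))
    (⟨t, ht⟩ : Fin T)
  simp only [Fintype.piFinset_univ, card_univ, Fintype.card_fin, nsmul_eq_mul] at hsum
  simp only [expE, expPerm, dif_pos ht, hsum, Fintype.card_fun, Fintype.card_fin, Nat.cast_pow]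
  obtain ⟨T, rfl⟩ := Nat.exists_eq_add_of_lt ht
  rw [show t + T + 1 - 1 = t + T by omega, pow_succ]
  have : (0 : ℝ) < Fintype.card (Fin n → Equiv.Perm (Fin m)) := by exact_mod_cast Fintype.card_pos
  field_simp

end Expectation

def shuffleBregman {n m p : ℕ} (f : Fin n → Fin m → Vec p → ℝ) (xstar : Vec p) (α : ℝ)
    (π : Fin n → Equiv.Perm (Fin m)) (ℓ : Fin m) : ℝ :=
  bregman (fun z => (n : ℝ)⁻¹ * ∑ i, f i (π i ℓ) z) (fun z => avg fun i => gradient (f i (π i ℓ)) z)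
    (xbarStar f xstar α π ℓ) xstar

theorem expPerm_shuffleBregman_le {n m p : ℕ} (f : Fin n → Fin m → Vec p → ℝ) (xstar : Vec p)
    (α : ℝ) (ℓ : Fin m) : expPerm (shuffleBregman f xstar α · ℓ) ≤ sigShuffleSq f xstar α :=
  le_ciSup (f := fun k => expPerm (shuffleBregman f xstar α · k)) (Set.finite_range _).bddAbove ℓ

theorem norm_avg_sub_xbarStar_succ_sq_le {n m p : ℕ} (hn : 0 < n) {W : Matrix (Fin n) (Fin n) ℝ}
    (hW : ∀ j, ∑ i, W i j = 1) {μ L α : ℝ} (hμ : 0 < μ) {f : Fin n → Fin m → Vec p → ℝ}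
    (hdiff : ∀ i ℓ, Differentiable ℝ (f i ℓ))
    (hstrong : ∀ i ℓ (x y : Vec p),
      μ * ‖x - y‖ ^ 2 ≤ ⟪gradient (f i ℓ) x - gradient (f i ℓ) y, x - y⟫)
    (hsmooth : ∀ i ℓ (x y : Vec p), ‖gradient (f i ℓ) x - gradient (f i ℓ) y‖ ≤ L * ‖x - y‖)
    (xstar : Vec p) (hα : 0 < α) (hαL : α ≤ 1 / (2 * L)) (π : Fin n → Equiv.Perm (Fin m))
    (ℓ : Fin m) {y y' : Fin n → Vec p}
    (hy' : ∀ i, y' i = ∑ j, W i j • (y j - α • gradient (f j (π j ℓ)) (y j))) :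
    ‖avg y' - xbarStar f xstar α π ((ℓ : ℕ) + 1)‖ ^ 2
      ≤ (1 - α * μ / 2) * ‖avg y - xbarStar f xstar α π ℓ‖ ^ 2
        + 2 * α * shuffleBregman f xstar α π ℓ
        + (2 * α * L ^ 2 / n) * (1 / μ + α) * consSq y := by
  have hL := pos_of_le_one_div_two_mul hα hαL
  set G : Vec p → Vec p := fun z => avg fun i => gradient (f i (π i ℓ)) z
  set P := avg fun j => gradient (f j (π j ℓ)) (y j)
  have havg : avg y' = avg y - α • P := by
    rw [funext hy', avg_mix hW, avg_sub, avg_smul]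
  have hsplit : avg y' - xbarStar f xstar α π ((ℓ : ℕ) + 1)
      = (avg y - xbarStar f xstar α π ℓ) - α • (G (avg y) - G xstar) - α • (P - G (avg y)) := by
    rw [havg, xbarStar_succ]
    module
  have hinner := half_mul_norm_sq_add_sq_div_sub_bregman_le_inner hμ.le hL
    (hasGradientAt_avg fun i => hdiff i (π i ℓ)) (avg_strongMono hn fun i => hstrong i (π i ℓ))
    (avg_lipschitz hn fun i => hsmooth i (π i ℓ))
    (avg y) (xbarStar f xstar α π ℓ) xstar
  have hcons : ‖P - G (avg y)‖ ^ 2 ≤ L ^ 2 / n * consSq y :=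
    norm_avg_sub_avg_sq_le_consSq (fun i => hsmooth i (π i ℓ)) y
  rw [hsplit]
  refine (norm_sub_smul_sub_smul_sq_le hμ hα hαL hinner).trans ?_
  have : (2 * α / μ + 2 * α ^ 2) * (L ^ 2 / n * consSq y)
      = (2 * α * L ^ 2 / n) * (1 / μ + α) * consSq y := by ring
  rw [shuffleBregman, ← this]
  gcongr

theorem drr_lemma5_general
    (n m p : ℕ) (hn : 0 < n)
    (W : Matrix (Fin n) (Fin n) ℝ)
    (hWsymm : W.IsSymm) (hWstoch : ∀ i, ∑ j, W i j = 1)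
    (μ L : ℝ) (hμ : 0 < μ)
    (f : Fin n → Fin m → Vec p → ℝ)
    (hdiff : ∀ i ℓ, Differentiable ℝ (f i ℓ))
    (hstrong : ∀ i ℓ (x y : Vec p),
      μ * ‖x - y‖ ^ 2 ≤ inner ℝ (gradient (f i ℓ) x - gradient (f i ℓ) y) (x - y))
    (hsmooth : ∀ i ℓ (x y : Vec p),
      ‖gradient (f i ℓ) x - gradient (f i ℓ) y‖ ≤ L * ‖x - y‖)
    (xstar : Vec p)
    (α : ℕ → ℝ) (hαpos : ∀ t, 0 < α t)
    (x : Omega n m → ℕ → ℕ → Fin n → Vec p)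
    (hxstep : ∀ ω t (ℓ : Fin m) i, x ω t ((ℓ : ℕ) + 1) i
      = ∑ j, W i j • (x ω t (ℓ : ℕ) j - α t • gradient (f j (ω t j ℓ)) (x ω t (ℓ : ℕ) j)))
    (hα2L : ∀ t, α t ≤ 1 / (2 * L)) :
    ∀ (t : ℕ) (ℓ : Fin m),
      expE (t + 1) (fun ω =>
          ‖avg (x ω t ((ℓ : ℕ) + 1)) - xbarStar f xstar (α t) (ω t) ((ℓ : ℕ) + 1)‖ ^ 2)
        ≤ (1 - α t * μ / 2) * expE (t + 1) (fun ω =>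
              ‖avg (x ω t (ℓ : ℕ)) - xbarStar f xstar (α t) (ω t) (ℓ : ℕ)‖ ^ 2)
          + 2 * α t * sigShuffleSq f xstar (α t)
          + (2 * α t * L ^ 2 / n) * (1 / μ + α t)
              * expE (t + 1) (fun ω => consSq (x ω t (ℓ : ℕ))) := by
  intro t ℓ
  have hcol : ∀ j, ∑ i, W i j = 1 := fun j => by simpa only [hWsymm.apply] using hWstoch j
  have hstep := fun ω : Omega n m => norm_avg_sub_xbarStar_succ_sq_le hn hcol hμ hdiff hstrong
    hsmooth xstar (hαpos t) (hα2L t) (ω t) ℓ (y := x ω t ℓ) (y' := x ω t (ℓ + 1)) (hxstep ω t ℓ)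
  have hE := expE_mono (T := t + 1) hstep
  rw [expE_add, expE_add, expE_const_mul, expE_const_mul, expE_const_mul,
    expE_comp_eval (Nat.lt_succ_self t) (shuffleBregman f xstar (α t) · ℓ)] at hE
  refine hE.trans ?_
  have := (hαpos t).le
  gcongr
  exact expPerm_shuffleBregman_le f xstar (α t) ℓ

/-- **Lemma 5.** If α_t ≤ 1/(2L), then for all epochs t and all ℓ = 0,…,m−1,
E‖x̄_t^{ℓ+1} − x̄_*^{ℓ+1}‖² ≤ (1 − α_t μ/2) E‖x̄_t^ℓ − x̄_*^ℓ‖² + 2 α_t σ_shuffle²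
  + (2 α_t L²/n)(1/μ + α_t) E‖𝐱_t^ℓ − 𝟏(x̄_t^ℓ)ᵀ‖². -/
theorem drr_lemma5
    (n m p : ℕ) (hn : 0 < n) (hm : 0 < m)
    (W : Matrix (Fin n) (Fin n) ℝ)
    (hWpos : ∀ i j, 0 ≤ W i j) (hWsymm : W.IsSymm) (hWstoch : ∀ i, ∑ j, W i j = 1)
    (hρ : rhoW W < 1)
    (μ L : ℝ) (hμ : 0 < μ) (hμL : μ ≤ L)
    (f : Fin n → Fin m → Vec p → ℝ)
    (hdiff : ∀ i ℓ, Differentiable ℝ (f i ℓ))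
    (hstrong : ∀ i ℓ (x y : Vec p),
      μ * ‖x - y‖ ^ 2 ≤ inner ℝ (gradient (f i ℓ) x - gradient (f i ℓ) y) (x - y))
    (hsmooth : ∀ i ℓ (x y : Vec p),
      ‖gradient (f i ℓ) x - gradient (f i ℓ) y‖ ≤ L * ‖x - y‖)
    (xstar : Vec p)
    (hmin : ∀ y : Vec p,
      ((m : ℝ) * n)⁻¹ * ∑ i, ∑ ℓ, f i ℓ xstar ≤ ((m : ℝ) * n)⁻¹ * ∑ i, ∑ ℓ, f i ℓ y)
    (α : ℕ → ℝ) (hαpos : ∀ t, 0 < α t)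
    (x0 : Fin n → Vec p)
    (x : Omega n m → ℕ → ℕ → Fin n → Vec p)
    (hxinit : ∀ ω i, x ω 0 0 i = x0 i)
    (hxstep : ∀ ω t (ℓ : Fin m) i, x ω t ((ℓ : ℕ) + 1) i
      = ∑ j, W i j • (x ω t (ℓ : ℕ) j - α t • gradient (f j (ω t j ℓ)) (x ω t (ℓ : ℕ) j)))
    (hxepoch : ∀ ω t i, x ω (t + 1) 0 i = x ω t m i)
    (hα2L : ∀ t, α t ≤ 1 / (2 * L)) :
    ∀ (t : ℕ) (ℓ : Fin m),
      expE (t + 1) (fun ω =>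
          ‖avg (x ω t ((ℓ : ℕ) + 1)) - xbarStar f xstar (α t) (ω t) ((ℓ : ℕ) + 1)‖ ^ 2)
        ≤ (1 - α t * μ / 2) * expE (t + 1) (fun ω =>
              ‖avg (x ω t (ℓ : ℕ)) - xbarStar f xstar (α t) (ω t) (ℓ : ℕ)‖ ^ 2)
          + 2 * α t * sigShuffleSq f xstar (α t)
          + (2 * α t * L ^ 2 / n) * (1 / μ + α t)
              * expE (t + 1) (fun ω => consSq (x ω t (ℓ : ℕ))) :=
  drr_lemma5_general n m p hn W hWsymm hWstoch μ L hμ f hdiff hstrong hsmooth xstar α hαpos x hxstep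
    hα2L

end DRR
end
end

section
/- (Lemma: variance transfer under smoothness and lower boundedness) Suppose each f_{i,ℓ} : ℝ^p → ℝ is L-smooth and bounded below by f̄_{i,ℓ}, and f̄ := inf_{x} f(x) is finite. Then, with A := 2L and B² := 2L( f̄ − (1/(mn)) Σ_{i=1}^n Σ_{ℓ=1}^m f̄_{i,ℓ} ), one has A, B² ≥ 0 and for every x ∈ ℝ^p: (1/(mn)) Σ_{i=1}^n Σ_{ℓ=1}^m ‖∇f_{i,ℓ}(x) − ∇f(x)‖² ≤ 2A ( f(x) − f̄ ) + B². -/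
open Finset

noncomputable section

namespace DRR

/-- The global objective f = (1/(mn)) ∑_i ∑_ℓ f_{i,ℓ}. -/
noncomputable def favg {n m p : ℕ} (f : Fin n → Fin m → Vec p → ℝ) : Vec p → ℝ :=
  fun y => ((m : ℝ) * n)⁻¹ * ∑ i, ∑ ℓ, f i ℓ y



section Aux

variable {p : ℕ}

private lemma grad_deriv (g : Vec p → ℝ) (hd : Differentiable ℝ g) (x v : Vec p) (t : ℝ) :
    HasDerivAt (fun s : ℝ => g (x + s • v)) (inner ℝ (gradient g (x + t • v)) v : ℝ) t := by
  have h1 : HasDerivAt (fun s : ℝ => x + s • v) v t := by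
    simpa using ((hasDerivAt_id t).smul_const v).const_add x
  have h2 := (hd (x + t • v)).hasGradientAt.hasFDerivAt
  have h3 := h2.comp_hasDerivAt t h1
  exact h3

private lemma grad_cont {L : ℝ} (hL : 0 ≤ L) (g : Vec p → ℝ)
    (hlip : ∀ x y, ‖gradient g x - gradient g y‖ ≤ L * ‖x - y‖) :
    Continuous (gradient g) := by
  have : LipschitzWith L.toNNReal (gradient g) := by
    apply LipschitzWith.of_dist_le_mul
    intro x y
    simpa [dist_eq_norm, Real.coe_toNNReal L hL] using hlip x y
  exact this.continuous

private lemma quad_bound {L : ℝ} (hL : 0 ≤ L) (g : Vec p → ℝ) (hd : Differentiable ℝ g)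
    (hlip : ∀ x y, ‖gradient g x - gradient g y‖ ≤ L * ‖x - y‖) (x v : Vec p) :
    g (x + v) ≤ g x + (inner ℝ (gradient g x) v : ℝ) + L / 2 * ‖v‖ ^ 2 := by
  have hcont : Continuous fun t : ℝ => (inner ℝ (gradient g (x + t • v)) v : ℝ) := by
    have h1 : Continuous fun t : ℝ => gradient g (x + t • v) :=
      (grad_cont hL g hlip).comp (by continuity)
    exact h1.inner continuous_const
  have key : ∫ t in (0:ℝ)..1, (inner ℝ (gradient g (x + t • v)) v : ℝ) = g (x + v) - g x := by
    have := intervalIntegral.integral_eq_sub_of_hasDerivAt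
      (f := fun s : ℝ => g (x + s • v)) (f' := fun t => (inner ℝ (gradient g (x + t • v)) v : ℝ))
      (fun t _ => grad_deriv g hd x v t) (hcont.intervalIntegrable 0 1)
    simpa using this
  have hmono : ∫ t in (0:ℝ)..1, (inner ℝ (gradient g (x + t • v)) v : ℝ)
      ≤ ∫ t in (0:ℝ)..1, ((inner ℝ (gradient g x) v : ℝ) + L * ‖v‖ ^ 2 * t) := by
    apply intervalIntegral.integral_mono_on zero_le_one (hcont.intervalIntegrable 0 1)
    · exact (Continuous.intervalIntegrable (by continuity) 0 1)
    · intro t ht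
      have h3 := real_inner_le_norm (gradient g (x + t • v) - gradient g x) v
      rw [inner_sub_left] at h3
      have h2 : ‖gradient g (x + t • v) - gradient g x‖ ≤ L * (t * ‖v‖) := by
        have := hlip (x + t • v) x
        simpa [norm_smul, abs_of_nonneg ht.1] using this
      nlinarith [norm_nonneg v, norm_nonneg (gradient g (x + t • v) - gradient g x), ht.1]
  have hval : ∫ t in (0:ℝ)..1, ((inner ℝ (gradient g x) v : ℝ) + L * ‖v‖ ^ 2 * t)
      = (inner ℝ (gradient g x) v : ℝ) + L / 2 * ‖v‖ ^ 2 := by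
    rw [intervalIntegral.integral_add intervalIntegrable_const
      (Continuous.intervalIntegrable (by continuity) 0 1),
      intervalIntegral.integral_const_mul, integral_id]
    simp; ring
  linarith [key ▸ (hval ▸ hmono)]

private lemma grad_sq_le {L c : ℝ} (hL : 0 < L) (g : Vec p → ℝ) (hd : Differentiable ℝ g)
    (hlip : ∀ x y, ‖gradient g x - gradient g y‖ ≤ L * ‖x - y‖)
    (hc : ∀ x, c ≤ g x) (x : Vec p) :
    ‖gradient g x‖ ^ 2 ≤ 2 * L * (g x - c) := by
  have h := quad_bound hL.le g hd hlip x (-(L⁻¹ • gradient g x))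
  have h2 := hc (x + -(L⁻¹ • gradient g x))
  rw [inner_neg_right, real_inner_smul_right, real_inner_self_eq_norm_sq] at h
  have hn : ‖-(L⁻¹ • gradient g x)‖ ^ 2 = (L⁻¹) ^ 2 * ‖gradient g x‖ ^ 2 := by
    rw [norm_neg, norm_smul, Real.norm_eq_abs, abs_inv, abs_of_pos hL]
    ring
  rw [hn] at h
  have e : L / 2 * (L⁻¹ ^ 2 * ‖gradient g x‖ ^ 2) = L⁻¹ * ‖gradient g x‖ ^ 2 / 2 := by
    field_simp
  rw [e] at h
  have h4 : L⁻¹ * ‖gradient g x‖ ^ 2 ≤ 2 * (g x - c) := by linarith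
  have h5 := mul_le_mul_of_nonneg_left h4 hL.le
  rw [← mul_assoc, mul_inv_cancel₀ hL.ne', one_mul] at h5
  linarith

private lemma grad_favg {n m : ℕ} (f : Fin n → Fin m → Vec p → ℝ)
    (hdiff : ∀ i ℓ, Differentiable ℝ (f i ℓ)) (y : Vec p) :
    gradient (favg f) y = ((m : ℝ) * n)⁻¹ • ∑ i, ∑ ℓ, gradient (f i ℓ) y := by
  have hs : HasFDerivAt (fun y => ∑ i, ∑ ℓ, f i ℓ y)
      (∑ i, ∑ ℓ, fderiv ℝ (f i ℓ) y) y :=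
    HasFDerivAt.fun_sum fun i _ => HasFDerivAt.fun_sum fun ℓ _ => (hdiff i ℓ y).hasFDerivAt
  have h : HasFDerivAt (favg f) (((m : ℝ) * n)⁻¹ • ∑ i, ∑ ℓ, fderiv ℝ (f i ℓ) y) y :=
    hs.const_mul _
  rw [gradient, h.fderiv, map_smul, map_sum]
  simp only [map_sum]
  rfl

private lemma var_le {n m : ℕ} (g : Fin n → Fin m → Vec p) (hn : 0 < n) (hm : 0 < m) :
    ∑ i, ∑ ℓ, ‖g i ℓ - ((m : ℝ) * n)⁻¹ • ∑ i, ∑ ℓ, g i ℓ‖ ^ 2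
      ≤ ∑ i, ∑ ℓ, ‖g i ℓ‖ ^ 2 := by
  set G : Vec p := ((m : ℝ) * n)⁻¹ • ∑ i, ∑ ℓ, g i ℓ with hG
  have hmn : ((m : ℝ) * n) ≠ 0 := by positivity
  have hS : ∑ i, ∑ ℓ, g i ℓ = ((m : ℝ) * n) • G := by
    rw [hG, smul_smul, mul_inv_cancel₀ hmn, one_smul]
  have key : ∑ i, ∑ ℓ, ‖g i ℓ - G‖ ^ 2
      = (∑ i, ∑ ℓ, ‖g i ℓ‖ ^ 2) - ((m : ℝ) * n) * ‖G‖ ^ 2 := by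
    have expand : ∀ i ℓ, ‖g i ℓ - G‖ ^ 2
        = ‖g i ℓ‖ ^ 2 - 2 * (inner ℝ (g i ℓ) G : ℝ) + ‖G‖ ^ 2 :=
      fun i ℓ => norm_sub_sq_real _ _
    simp_rw [expand, Finset.sum_add_distrib, Finset.sum_sub_distrib, Finset.sum_const,
      ← Finset.mul_sum, ← sum_inner, hS, real_inner_smul_left, real_inner_self_eq_norm_sq,
      card_univ, Fintype.card_fin, nsmul_eq_mul]
    ring
  rw [key]
  nlinarith [sq_nonneg ‖G‖, mul_pos (Nat.cast_pos.2 hm) (Nat.cast_pos.2 hn : (0:ℝ) < n)]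

end Aux

/-- Variance transfer under smoothness and lower boundedness. -/
theorem drr_variance_transfer
    (n m p : ℕ) (hn : 0 < n) (hm : 0 < m)
    (L : ℝ) (hL : 0 < L)
    (f : Fin n → Fin m → Vec p → ℝ)
    (hdiff : ∀ i ℓ, Differentiable ℝ (f i ℓ))
    (hsmooth : ∀ i ℓ (x y : Vec p),
      ‖gradient (f i ℓ) x - gradient (f i ℓ) y‖ ≤ L * ‖x - y‖)
    (flb : Fin n → Fin m → ℝ) (hlb : ∀ i ℓ (x : Vec p), flb i ℓ ≤ f i ℓ x)
    (fbar : ℝ) (hfbar : IsGLB (Set.range (favg f)) fbar) :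
    ∀ A B2 : ℝ,
      A = 2 * L →
      B2 = 2 * L * (fbar - ((m : ℝ) * n)⁻¹ * ∑ i, ∑ ℓ, flb i ℓ) →
      0 ≤ A ∧ 0 ≤ B2 ∧
        ∀ y : Vec p,
          ((m : ℝ) * n)⁻¹ * ∑ i, ∑ ℓ, ‖gradient (f i ℓ) y - gradient (favg f) y‖ ^ 2
            ≤ 2 * A * (favg f y - fbar) + B2 := by
  intro A B2 hA hB2
  have hmn : (0:ℝ) < (m : ℝ) * n := by positivity
  have hcinv : (0:ℝ) ≤ ((m : ℝ) * n)⁻¹ := by positivity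
  -- the averaged lower bound is a lower bound on favg f
  have hlbavg : ∀ y : Vec p, ((m : ℝ) * n)⁻¹ * ∑ i, ∑ ℓ, flb i ℓ ≤ favg f y := by
    intro y
    apply mul_le_mul_of_nonneg_left _ hcinv
    exact Finset.sum_le_sum fun i _ => Finset.sum_le_sum fun ℓ _ => hlb i ℓ y
  have hfbar_le : ∀ y : Vec p, fbar ≤ favg f y := fun y => hfbar.1 ⟨y, rfl⟩
  have hlb_fbar : ((m : ℝ) * n)⁻¹ * ∑ i, ∑ ℓ, flb i ℓ ≤ fbar :=
    hfbar.2 fun r ⟨y, hy⟩ => hy ▸ hlbavg y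
  refine ⟨by rw [hA]; positivity, by rw [hB2]; nlinarith, ?_⟩
  intro y
  have hgrad := grad_favg f hdiff y
  -- step 1 : variance ≤ second moment
  have step1 : ∑ i, ∑ ℓ, ‖gradient (f i ℓ) y - gradient (favg f) y‖ ^ 2
      ≤ ∑ i, ∑ ℓ, ‖gradient (f i ℓ) y‖ ^ 2 := by
    rw [hgrad]
    exact var_le (fun i ℓ => gradient (f i ℓ) y) hn hm
  -- step 2 : pointwise bound on each gradient
  have step2 : ∑ i, ∑ ℓ, ‖gradient (f i ℓ) y‖ ^ 2
      ≤ ∑ i, ∑ ℓ, (2 * L * (f i ℓ y - flb i ℓ)) := by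
    refine Finset.sum_le_sum fun i _ => Finset.sum_le_sum fun ℓ _ => ?_
    exact grad_sq_le hL (f i ℓ) (hdiff i ℓ) (hsmooth i ℓ) (hlb i ℓ) y
  have step3 : ((m : ℝ) * n)⁻¹ * ∑ i, ∑ ℓ, (2 * L * (f i ℓ y - flb i ℓ))
      = 2 * L * (favg f y - ((m : ℝ) * n)⁻¹ * ∑ i, ∑ ℓ, flb i ℓ) := by
    simp_rw [mul_sub, Finset.sum_sub_distrib, ← Finset.mul_sum]
    rw [favg]
    ring
  have hmain : ((m : ℝ) * n)⁻¹ * ∑ i, ∑ ℓ, ‖gradient (f i ℓ) y - gradient (favg f) y‖ ^ 2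
      ≤ 2 * L * (favg f y - fbar) + B2 := by
    calc ((m : ℝ) * n)⁻¹ * ∑ i, ∑ ℓ, ‖gradient (f i ℓ) y - gradient (favg f) y‖ ^ 2
        ≤ ((m : ℝ) * n)⁻¹ * ∑ i, ∑ ℓ, (2 * L * (f i ℓ y - flb i ℓ)) :=
          mul_le_mul_of_nonneg_left (step1.trans step2) hcinv
      _ = 2 * L * (favg f y - ((m : ℝ) * n)⁻¹ * ∑ i, ∑ ℓ, flb i ℓ) := step3
      _ = 2 * L * (favg f y - fbar) + B2 := by rw [hB2]; ring
  have hApos : 0 ≤ 2 * A * (favg f y - fbar) - A * (favg f y - fbar) := by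
    have := hfbar_le y
    nlinarith [hL.le]
  calc ((m : ℝ) * n)⁻¹ * ∑ i, ∑ ℓ, ‖gradient (f i ℓ) y - gradient (favg f) y‖ ^ 2
      ≤ 2 * L * (favg f y - fbar) + B2 := hmain
    _ = A * (favg f y - fbar) + B2 := by rw [hA]
    _ ≤ 2 * A * (favg f y - fbar) + B2 := by linarith


end DRR
end
end

section
/- (Recursion-to-rate lemma) Suppose a, c ≥ 0, b > 0, T ≥ 1, and nonnegative real sequences (s_t)_{t=0}^{T}, (q_t)_{t=0}^{T} satisfy s_{t+1} ≤ (1+a)s_t − b q_t + c for every t with 0 ≤ t ≤ T−1. Then min_{t=0,…,T−1} q_t ≤ (1+a)^T s_0/(bT) + c/b. -/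
open Finset

/-!
Let `m` be the minimum of `q` over the first `T` steps. If `b m ≤ c` there is nothing to prove.
Otherwise every step decreases `s` by at least `d = b m - c > 0` after the growth by `1 + a`, so
`s_T + T d ≤ (1 + a)^T s_0`, and `s_T ≥ 0` bounds `T d`.
-/

theorem add_mul_le_pow_mul_of_le_mul_sub {r d : ℝ} (hr : 1 ≤ r) (hd : 0 ≤ d) {s : ℕ → ℝ}
    {T : ℕ} (hstep : ∀ t < T, s (t + 1) ≤ r * s t - d) :
    ∀ t ≤ T, s t + t * d ≤ r ^ t * s 0 := by
  intro t
  induction t with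
  | zero => simp
  | succ t ih =>
    intro ht
    have hs := hstep t (by omega)
    have ih := ih (by omega)
    have hgrow : (t : ℝ) * d ≤ r * (t * d) :=
      le_mul_of_one_le_left (by positivity) hr
    calc s (t + 1) + (t + 1 : ℕ) * d ≤ r * (s t + t * d) := by push_cast; linarith
      _ ≤ r ^ (t + 1) * s 0 := by
        rw [pow_succ', mul_assoc]; exact mul_le_mul_of_nonneg_left ih (by linarith)

theorem recursion_to_rate_general
    (a b c : ℝ) (T : ℕ) (ha : 0 ≤ a) (hb : 0 < b) (hT : 1 ≤ T)
    (s q : ℕ → ℝ) (hs : ∀ t ≤ T, 0 ≤ s t)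
    (hrec : ∀ t < T, s (t + 1) ≤ (1 + a) * s t - b * q t + c) :
    (range T).inf' (nonempty_range_iff.mpr (Nat.one_le_iff_ne_zero.mp hT)) q
      ≤ (1 + a) ^ T * s 0 / (b * T) + c / b := by
  set m := (range T).inf' (nonempty_range_iff.mpr (Nat.one_le_iff_ne_zero.mp hT)) q
  have hTpos : (0 : ℝ) < T := by exact_mod_cast hT
  have hs0 := hs 0 (Nat.zero_le T)
  rw [show (1 + a) ^ T * s 0 / (b * T) + c / b = ((1 + a) ^ T * s 0 / T + c) / b by
    field_simp, le_div_iff₀ hb]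
  rcases le_or_gt (b * m) c with hsmall | hlarge
  · have : 0 ≤ (1 + a) ^ T * s 0 / T := by positivity
    linarith
  · have hstep : ∀ t < T, s (t + 1) ≤ (1 + a) * s t - (b * m - c) := fun t ht => by
      have hm : b * m ≤ b * q t := by gcongr; exact inf'_le q (mem_range.mpr ht)
      linarith [hrec t ht]
    have hdecay := add_mul_le_pow_mul_of_le_mul_sub (by linarith) (by linarith) hstep T le_rfl
    have hdrop : b * m - c ≤ (1 + a) ^ T * s 0 / T := by
      rw [le_div_iff₀ hTpos]; linarith [hs T le_rfl]
    linarith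

/-- **Recursion-to-rate lemma.** If s_{t+1} ≤ (1+a)s_t − b q_t + c for all
0 ≤ t ≤ T−1, with a, c ≥ 0, b > 0 and s_t, q_t ≥ 0, then
min_{t=0,…,T−1} q_t ≤ (1+a)^T s_0/(bT) + c/b. -/
theorem recursion_to_rate
    (a b c : ℝ) (T : ℕ) (ha : 0 ≤ a) (hb : 0 < b) (hc : 0 ≤ c) (hT : 1 ≤ T)
    (s q : ℕ → ℝ) (hs : ∀ t ≤ T, 0 ≤ s t) (hq : ∀ t ≤ T, 0 ≤ q t)
    (hrec : ∀ t < T, s (t + 1) ≤ (1 + a) * s t - b * q t + c) :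
    (range T).inf' (nonempty_range_iff.mpr (Nat.one_le_iff_ne_zero.mp hT)) q
      ≤ (1 + a) ^ T * s 0 / (b * T) + c / b :=
  recursion_to_rate_general a b c T ha hb hT s q hs hrec
end
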